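/- arXiv:1503.00525 — 7 statements merged into one kernel-verified Lean document; each statement's English description precedes it below -/
import Mathlib

section
/- Let s ∈ ℂ. Let f_a : (-1,∞) → V, f_b : (-∞,1) → V and f_c : (0,∞) → V be arbitrary functions. Then the pair (f_a, f_b) satisfies the reduced transfer-operator eigenfunction equations (Ra) f_a(x) = χ(k₁)⁻¹ f_a(x+2) + ((x+2)²)^(−s) χ(k₂) ( f_a(−1/(x+2)) + f_b(−1/(x+2)) ) for all x ∈ (−1,∞), and (Rb) f_b(x) = ((x−2)²)^(−s) χ(k₃) ( f_a(−1/(x−2)) + f_b(−1/(x−2)) ) + χ(k₁) f_b(x−2) for all x ∈ (−∞,1), if and only if the triple (f_a, f_b, f_c) with f_c defined by f_c(x) = f_a(x) + (x²)^(−s) χ(k₄) f_b(−1/x) for x ∈ (0,∞) satisfies the original transfer-operator eigenfunction equations (Ea) f_a(x) = ((x+2)²)^(−s) χ(k₂) f_a(−1/(x+2)) + χ(k₁)⁻¹ f_c(x+2) for all x ∈ (−1,∞), (Eb) f_b(x) = ((x−2)²)^(−s) χ(k₃) ( f_b(−1/(x−2)) + f_c(−1/(x−2)) ) for all x ∈ (−∞,1),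 and (Ec) f_c(x) = f_a(x) + (x²)^(−s) χ(k₄) f_b(−1/x) for all x ∈ (0,∞). In other words, (f_a,f_b) ↔ (f_a,f_b,f_c) is a bijection between the 1-eigenfunction vectors of the reduced transfer operator for the Theta group and those of the original transfer operator. -/
/-!
The two systems differ only by substituting the definition of `f_c`. In (Ea) this is
the identity `χ(k₂) = χ(k₁)⁻¹ χ(k₄)`. In (Eb) the substituted term is
`((x-2)²)^(-s) ((1/(x-2))²)^(-s) χ(k₃) χ(k₄) f_b(x-2)`; the two powers cancel, and
`χ(k₃) χ(k₄) = χ(k₁) χ(S²) = χ(k₁)` because `S² = -I` acts trivially.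
-/

open Matrix Complex

noncomputable section

abbrev SL2R := Matrix.SpecialLinearGroup (Fin 2) ℝ

def Smat : SL2R := ⟨!![0, 1; -1, 0], by norm_num [Matrix.det_fin_two_of]⟩

def Tmat (lam : ℝ) : SL2R := ⟨!![1, lam; 0, 1], by norm_num [Matrix.det_fin_two_of]⟩

/-- The Theta group `Γ₂`, the subgroup of `SL(2,ℝ)` generated by
`S = [[0,1],[-1,0]]` and `T = [[1,2],[0,1]]`. -/
def ThetaGroup : Subgroup SL2R := Subgroup.closure {Smat, Tmat 2}

def k1 : ThetaGroup := ⟨Tmat 2, Subgroup.subset_closure (by simp)⟩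
def k4 : ThetaGroup := ⟨Smat, Subgroup.subset_closure (by simp)⟩
def k2 : ThetaGroup := k1⁻¹ * k4
def k3 : ThetaGroup := k1 * k4

theorem Smat_mul_self : Smat * Smat = -1 := by
  ext i j
  rw [Matrix.SpecialLinearGroup.coe_mul]
  fin_cases i <;> fin_cases j <;> simp [Smat, Matrix.mul_apply]

theorem neg_one_mem_thetaGroup : (-1 : SL2R) ∈ ThetaGroup :=
  Smat_mul_self ▸ mul_mem k4.2 k4.2

theorem k3_mul_k4 : k3 * k4 = k1 * ⟨-1, neg_one_mem_thetaGroup⟩ := by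
  rw [k3, mul_assoc]
  exact congrArg (k1 * ·) (Subtype.ext Smat_mul_self)

theorem cpow_sq_mul_cpow_sq_neg_one_div {y : ℝ} (hy : y ≠ 0) (s : ℂ) :
    (((y ^ 2 : ℝ) : ℂ) ^ (-s)) * ((((-1 / y) ^ 2 : ℝ) : ℂ) ^ (-s)) = 1 := by
  have hprod : y ^ 2 * (-1 / y) ^ 2 = 1 := by field_simp
  rw [← mul_cpow_ofReal_nonneg (sq_nonneg _) (sq_nonneg _), ← ofReal_mul, hprod, ofReal_one,
    one_cpow]

section Representation

variable {V : Type} [NormedAddCommGroup V] [InnerProductSpace ℂ V]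
  (χ : ThetaGroup →* (V ≃ₗᵢ[ℂ] V)) (s : ℂ) (fa fb : ℝ → V)

theorem map_k2_apply (v : V) : χ k2 v = χ k1⁻¹ (χ k4 v) := by
  rw [k2, map_mul, LinearIsometryEquiv.coe_mul, Function.comp_apply]

theorem map_k3_map_k4_apply (hχneg : ∀ h : (-1 : SL2R) ∈ ThetaGroup, χ ⟨-1, h⟩ = 1) (v : V) :
    χ k3 (χ k4 v) = χ k1 v := by
  rw [← Function.comp_apply (f := χ k3), ← LinearIsometryEquiv.coe_mul, ← map_mul, k3_mul_k4,
    map_mul, hχneg, mul_one]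

theorem reduced_rhs_a_eq_original (x : ℝ) :
    χ k1⁻¹ (fa (x + 2))
        + ((((x + 2) ^ 2 : ℝ) : ℂ) ^ (-s)) • χ k2 (fa (-1 / (x + 2)) + fb (-1 / (x + 2))) =
      ((((x + 2) ^ 2 : ℝ) : ℂ) ^ (-s)) • χ k2 (fa (-1 / (x + 2)))
        + χ k1⁻¹ (fa (x + 2)
          + ((((x + 2) ^ 2 : ℝ) : ℂ) ^ (-s)) • χ k4 (fb (-1 / (x + 2)))) := by
  simp only [map_add, map_smul, smul_add, map_k2_apply]
  abel

theorem reduced_rhs_b_eq_original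
    (hχneg : ∀ h : (-1 : SL2R) ∈ ThetaGroup, χ ⟨-1, h⟩ = 1) {y : ℝ} (hy : y ≠ 0) :
    (((y ^ 2 : ℝ) : ℂ) ^ (-s)) • χ k3 (fa (-1 / y) + fb (-1 / y)) + χ k1 (fb y) =
      (((y ^ 2 : ℝ) : ℂ) ^ (-s)) • χ k3 (fb (-1 / y)
        + (fa (-1 / y) + ((((-1 / y) ^ 2 : ℝ) : ℂ) ^ (-s)) • χ k4 (fb (-1 / (-1 / y))))) := by
  simp only [div_div_cancel₀ (neg_ne_zero.mpr (one_ne_zero' ℝ)), map_add, map_smul, smul_add,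
    map_k3_map_k4_apply χ hχneg, smul_smul, cpow_sq_mul_cpow_sq_neg_one_div hy, one_smul]
  abel

end Representation

theorem theta_reduced_iff_original_general
    {V : Type} [NormedAddCommGroup V] [InnerProductSpace ℂ V]
    (χ : ThetaGroup →* (V ≃ₗᵢ[ℂ] V))
    (hχneg : ∀ h : (-1 : SL2R) ∈ ThetaGroup, χ ⟨-1, h⟩ = 1)
    (s : ℂ) (fa fb : ℝ → V) :
    ((∀ x : ℝ, -1 < x →
        fa x = χ k1⁻¹ (fa (x + 2))
          + ((((x + 2) ^ 2 : ℝ) : ℂ) ^ (-s)) • χ k2 (fa (-1 / (x + 2)) + fb (-1 / (x + 2)))) ∧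
     (∀ x : ℝ, x < 1 →
        fb x = ((((x - 2) ^ 2 : ℝ) : ℂ) ^ (-s)) • χ k3 (fa (-1 / (x - 2)) + fb (-1 / (x - 2)))
          + χ k1 (fb (x - 2))))
    ↔
    (let fc : ℝ → V := fun x => fa x + (((x ^ 2 : ℝ) : ℂ) ^ (-s)) • χ k4 (fb (-1 / x))
     (∀ x : ℝ, -1 < x →
        fa x = ((((x + 2) ^ 2 : ℝ) : ℂ) ^ (-s)) • χ k2 (fa (-1 / (x + 2)))
          + χ k1⁻¹ (fc (x + 2))) ∧
     (∀ x : ℝ, x < 1 →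
        fb x = ((((x - 2) ^ 2 : ℝ) : ℂ) ^ (-s)) • χ k3 (fb (-1 / (x - 2)) + fc (-1 / (x - 2)))) ∧
     (∀ x : ℝ, 0 < x →
        fc x = fa x + (((x ^ 2 : ℝ) : ℂ) ^ (-s)) • χ k4 (fb (-1 / x)))) := by
  have hA := reduced_rhs_a_eq_original χ s fa fb
  have hB : ∀ x : ℝ, x < 1 → _ :=
    fun x hx => reduced_rhs_b_eq_original χ s fa fb hχneg (y := x - 2) (by linarith)
  constructor
  · rintro ⟨hRa, hRb⟩
    exact ⟨fun x hx => (hRa x hx).trans (hA x), fun x hx => (hRb x hx).trans (hB x hx),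
      fun _ _ => rfl⟩
  · rintro ⟨hEa, hEb, -⟩
    exact ⟨fun x hx => (hEa x hx).trans (hA x).symm, fun x hx => (hEb x hx).trans (hB x hx).symm⟩

theorem theta_reduced_iff_original
    {V : Type} [NormedAddCommGroup V] [InnerProductSpace ℂ V] [FiniteDimensional ℂ V]
    (χ : ThetaGroup →* (V ≃ₗᵢ[ℂ] V))
    (hχneg : ∀ h : (-1 : SL2R) ∈ ThetaGroup, χ ⟨-1, h⟩ = 1)
    (s : ℂ) (fa fb : ℝ → V) :
    ((∀ x : ℝ, -1 < x →
        fa x = χ k1⁻¹ (fa (x + 2))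
          + ((((x + 2) ^ 2 : ℝ) : ℂ) ^ (-s)) • χ k2 (fa (-1 / (x + 2)) + fb (-1 / (x + 2)))) ∧
     (∀ x : ℝ, x < 1 →
        fb x = ((((x - 2) ^ 2 : ℝ) : ℂ) ^ (-s)) • χ k3 (fa (-1 / (x - 2)) + fb (-1 / (x - 2)))
          + χ k1 (fb (x - 2))))
    ↔
    (let fc : ℝ → V := fun x => fa x + (((x ^ 2 : ℝ) : ℂ) ^ (-s)) • χ k4 (fb (-1 / x))
     (∀ x : ℝ, -1 < x →
        fa x = ((((x + 2) ^ 2 : ℝ) : ℂ) ^ (-s)) • χ k2 (fa (-1 / (x + 2)))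
          + χ k1⁻¹ (fc (x + 2))) ∧
     (∀ x : ℝ, x < 1 →
        fb x = ((((x - 2) ^ 2 : ℝ) : ℂ) ^ (-s)) • χ k3 (fb (-1 / (x - 2)) + fc (-1 / (x - 2)))) ∧
     (∀ x : ℝ, 0 < x →
        fc x = fa x + (((x ^ 2 : ℝ) : ℂ) ^ (-s)) • χ k4 (fb (-1 / x)))) :=
  theta_reduced_iff_original_general χ hχneg s fa fb
end
end

section
/- Let w ∈ ℂ with Re w > 0 and let θ ∈ ℂ with |θ| = 1 and θ ≠ 1. Then there exists an entire function F : ℂ → ℂ such that for all s ∈ ℂ with Re s > 1, F(s) = Σ_{n=0}^∞ θⁿ (n+w)^{−s}. (Holomorphic continuation of the Lerch zeta function ζ(s,a,w) = Σ_{n=0}^∞ e^{2πina}(n+w)^{−s} with nonintegral twist a, i.e. θ = e^{2πia} ≠ 1, and complex shift w with positive real part.) -/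
/-!
Summation by parts gives, for `θ ≠ 1`, `∑ θⁿ f(n) = f(0)/(1-θ) + θ/(1-θ) ∑ θⁿ Δf(n)` with
`Δf(x) = f(x+1) - f(x)`. Iterating it `k` times turns the Lerch series, `f(x) = (x+w)^{-s}`, into
a finite sum of entire functions `s ↦ Δʲf(0)` plus `(θ/(1-θ))ᵏ ∑ θⁿ Δᵏf(n)`. Since
`∂ₓ (x+w)^{-s} = -s (x+w)^{-s-1}`, the mean value theorem gives
`Δᵏf(x) = O((x + Re w)^{-(Re s + k)})` locally uniformly in `s`, so the remaining series is
holomorphic on `Re s > 1 - k`. These expressions agree where they overlap and glue to an entire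
function.
-/

open Complex fwdDiff Filter Topology

section EulerTransform

variable {𝕜 : Type*} [Field 𝕜] [TopologicalSpace 𝕜]

theorem one_sub_mul_tsum_pow_mul [IsTopologicalRing 𝕜] [T2Space 𝕜] {θ : 𝕜} {f : ℕ → 𝕜}
    (hf : Summable fun n => θ ^ n * f n) :
    (1 - θ) * ∑' n, θ ^ n * f n = f 0 + θ * ∑' n, θ ^ n * (f (n + 1) - f n) := by
  have hshift : Summable fun n => θ ^ (n + 1) * f (n + 1) := (summable_nat_add_iff 1).2 hf
  have hmul : Summable fun n => θ ^ (n + 1) * f n :=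
    (hf.mul_left θ).congr fun n => by ring
  calc (1 - θ) * ∑' n, θ ^ n * f n
      = f 0 + (∑' n, θ ^ (n + 1) * f (n + 1)) - ∑' n, θ ^ (n + 1) * f n := by
        rw [sub_mul, one_mul, ← tsum_mul_left, hf.tsum_eq_zero_add]
        simp only [pow_zero, one_mul, pow_succ, mul_assoc, mul_left_comm θ]
    _ = f 0 + θ * ∑' n, θ ^ n * (f (n + 1) - f n) := by
        rw [add_sub_assoc, ← hshift.tsum_sub hmul, ← tsum_mul_left]
        congr 1
        exact tsum_congr fun n => by ring

variable {M : Type*} [AddCommMonoidWithOne M]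

noncomputable def eulerTransform (θ : 𝕜) (f : M → 𝕜) (k : ℕ) : 𝕜 :=
  ∑ j ∈ Finset.range k, (θ / (1 - θ)) ^ j / (1 - θ) * (Δ_[1])^[j] f 0 +
    (θ / (1 - θ)) ^ k * ∑' n : ℕ, θ ^ n * (Δ_[1])^[k] f n

variable {θ : 𝕜} {f : M → 𝕜}

@[simp] theorem eulerTransform_zero : eulerTransform θ f 0 = ∑' n : ℕ, θ ^ n * f n := by
  simp [eulerTransform]

theorem eulerTransform_succ [IsTopologicalRing 𝕜] [T2Space 𝕜] (hθ : θ ≠ 1) {k : ℕ}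
    (hf : Summable fun n : ℕ => θ ^ n * (Δ_[1])^[k] f n) :
    eulerTransform θ f (k + 1) = eulerTransform θ f k := by
  have h1θ : 1 - θ ≠ 0 := sub_ne_zero.2 hθ.symm
  have hstep : ∀ n : ℕ, (Δ_[1])^[k + 1] f n = (Δ_[1])^[k] f ↑(n + 1) - (Δ_[1])^[k] f n := by
    simp [Function.iterate_succ_apply', fwdDiff]
  have key := one_sub_mul_tsum_pow_mul hf
  simp only [← hstep, Nat.cast_zero] at key
  have hsum : ∑' n : ℕ, θ ^ n * (Δ_[1])^[k] f n =
      ((Δ_[1])^[k] f 0 + θ * ∑' n : ℕ, θ ^ n * (Δ_[1])^[k + 1] f n) / (1 - θ) := by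
    rw [eq_div_iff h1θ, mul_comm, key]
  rw [eulerTransform, eulerTransform, Finset.sum_range_succ, add_assoc, hsum]
  congr 1
  ring

theorem eulerTransform_eq_of_le [IsTopologicalRing 𝕜] [T2Space 𝕜] (hθ : θ ≠ 1) {j k : ℕ}
    (hjk : j ≤ k) (hf : ∀ i, j ≤ i → Summable fun n : ℕ => θ ^ n * (Δ_[1])^[i] f n) :
    eulerTransform θ f k = eulerTransform θ f j := by
  induction k, hjk using Nat.le_induction with
  | base => rfl
  | succ k hjk ih => rw [eulerTransform_succ hθ (hf k hjk), ih]

end EulerTransform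

section IteratedDifferences

variable {𝕜 : Type*} [NontriviallyNormedField 𝕜] {F : Type*} [NormedAddCommGroup F]
  [NormedSpace 𝕜 F]

theorem hasDerivAt_fwdDiff_iter {S : Set 𝕜} {h : 𝕜} (hS : ∀ x ∈ S, x + h ∈ S) {f f' : 𝕜 → F}
    (hf : ∀ x ∈ S, HasDerivAt f (f' x) x) (k : ℕ) {x : 𝕜} (hx : x ∈ S) :
    HasDerivAt ((Δ_[h])^[k] f) ((Δ_[h])^[k] f' x) x := by
  induction k generalizing x with
  | zero => exact hf x hx
  | succ k ih =>
    simp only [Function.iterate_succ_apply', fwdDiff]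
    exact ((ih (hS x hx)).comp_add_const x h).sub (ih hx)

theorem differentiable_fwdDiff_iter_apply {X : Type*} [AddCommMonoid X] {S : Set X} {h : X}
    (hS : ∀ x ∈ S, x + h ∈ S) {f : 𝕜 → X → F} (hf : ∀ x ∈ S, Differentiable 𝕜 fun s => f s x)
    (k : ℕ) {x : X} (hx : x ∈ S) :
    Differentiable 𝕜 fun s => (Δ_[h])^[k] (f s) x := by
  induction k generalizing x with
  | zero => exact hf x hx
  | succ k ih =>
    simp only [Function.iterate_succ_apply', fwdDiff]
    exact (ih (hS x hx)).sub (ih hx)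

end IteratedDifferences

theorem norm_fwdDiff_one_le {E : Type*} [NormedAddCommGroup E] [NormedSpace ℝ E] {f f' : ℝ → E}
    {x B : ℝ} (hf : ∀ t ∈ Set.Icc x (x + 1), HasDerivAt f (f' t) t)
    (hB : ∀ t ∈ Set.Ico x (x + 1), ‖f' t‖ ≤ B) :
    ‖Δ_[1] f x‖ ≤ B := by
  have := norm_image_sub_le_of_norm_deriv_le_segment' (fun t ht => (hf t ht).hasDerivWithinAt)
    hB (x + 1) (Set.right_mem_Icc.2 (by linarith))
  rwa [add_sub_cancel_left, mul_one] at this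

theorem norm_pow_mul_le {𝕜 : Type*} [NormedDivisionRing 𝕜] {θ : 𝕜} (hθ : ‖θ‖ ≤ 1) (n : ℕ)
    (z : 𝕜) : ‖θ ^ n * z‖ ≤ ‖z‖ := by
  rw [norm_mul, norm_pow]
  exact mul_le_of_le_one_left (norm_nonneg z) (pow_le_one₀ (norm_nonneg θ) hθ)

theorem Real.rpow_le_rpow_add_rpow {b p q r : ℝ} (hb : 0 < b) (hqp : q ≤ p) (hpr : p ≤ r) :
    b ^ p ≤ b ^ q + b ^ r := by
  rcases le_total 1 b with hb1 | hb1
  · exact (Real.rpow_le_rpow_of_exponent_le hb1 hpr).trans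
      (le_add_of_nonneg_left (Real.rpow_nonneg hb.le q))
  · exact (Real.rpow_le_rpow_of_exponent_ge hb hb1 hqp).trans
      (le_add_of_nonneg_right (Real.rpow_nonneg hb.le r))

theorem Real.summable_nat_add_rpow_neg {a p : ℝ} (ha : 0 < a) (hp : 1 < p) :
    Summable fun n : ℕ => ((n : ℝ) + a) ^ (-p) :=
  ((Real.summable_one_div_nat_add_rpow a p).2 hp).congr fun n => by
    have hna : 0 < (n : ℝ) + a := by positivity
    rw [abs_of_pos hna, Real.rpow_neg hna.le, one_div]

section LerchTerm

variable {w : ℂ}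

noncomputable def lerchTerm (w s : ℂ) (x : ℝ) : ℂ := ((x : ℂ) + w) ^ (-s)

theorem ofReal_add_mem_slitPlane {x : ℝ} (hx : 0 < x + w.re) : (x : ℂ) + w ∈ slitPlane :=
  mem_slitPlane_iff.2 (Or.inl (by simpa using hx))

theorem hasDerivAt_lerchTerm (s : ℂ) {x : ℝ} (hx : 0 < x + w.re) :
    HasDerivAt (lerchTerm w s) (-s * lerchTerm w (s + 1) x) x := by
  have := (((hasDerivAt_id (x : ℂ)).add_const w).cpow_const (c := -s)
    (ofReal_add_mem_slitPlane hx)).comp_ofReal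
  rw [id, mul_one, ← neg_add'] at this
  exact this

theorem differentiable_lerchTerm {x : ℝ} (hx : 0 < x + w.re) :
    Differentiable ℂ fun s => lerchTerm w s x :=
  differentiable_neg.const_cpow (Or.inl (slitPlane_ne_zero (ofReal_add_mem_slitPlane hx)))

theorem norm_lerchTerm_le {s : ℂ} (hs : 0 ≤ s.re) {x : ℝ} (hx : 0 < x + w.re) :
    ‖lerchTerm w s x‖ ≤ Real.exp (Real.pi * ‖s‖) * (x + w.re) ^ (-s.re) := by
  have hre : x + w.re ≤ ‖(x : ℂ) + w‖ := by simpa using re_le_norm ((x : ℂ) + w)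
  have harg : arg ((x : ℂ) + w) * s.im ≤ Real.pi * ‖s‖ :=
    (le_abs_self _).trans <| by
      rw [abs_mul]
      exact mul_le_mul (abs_arg_le_pi _) (abs_im_le_norm s) (abs_nonneg _) Real.pi_nonneg
  calc ‖lerchTerm w s x‖
      ≤ ‖(x : ℂ) + w‖ ^ (-s).re / Real.exp (arg ((x : ℂ) + w) * (-s).im) := norm_cpow_le _ _
    _ = ‖(x : ℂ) + w‖ ^ (-s.re) * Real.exp (arg ((x : ℂ) + w) * s.im) := by
        rw [neg_re, neg_im, mul_neg, Real.exp_neg, div_inv_eq_mul]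
    _ ≤ (x + w.re) ^ (-s.re) * Real.exp (Real.pi * ‖s‖) :=
        mul_le_mul (Real.rpow_le_rpow_of_nonpos hx hre (neg_nonpos.2 hs))
          (Real.exp_le_exp.2 harg) (Real.exp_pos _).le (Real.rpow_nonneg hx.le _)
    _ = _ := mul_comm _ _

theorem add_one_mem_setOf_pos_add_re :
    ∀ x ∈ {x : ℝ | 0 < x + w.re}, x + 1 ∈ {x : ℝ | 0 < x + w.re} :=
  fun x (hx : 0 < x + w.re) => show 0 < x + 1 + w.re by linarith

theorem hasDerivAt_fwdDiff_iter_lerchTerm (k : ℕ) (s : ℂ) {x : ℝ} (hx : 0 < x + w.re) :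
    HasDerivAt ((Δ_[1])^[k] (lerchTerm w s)) (-s * (Δ_[1])^[k] (lerchTerm w (s + 1)) x) x := by
  have := hasDerivAt_fwdDiff_iter (f' := (-s) • lerchTerm w (s + 1))
    add_one_mem_setOf_pos_add_re (fun t ht => hasDerivAt_lerchTerm s ht) k hx
  rwa [fwdDiff_iter_const_smul, Pi.smul_apply, smul_eq_mul] at this

theorem differentiable_fwdDiff_iter_lerchTerm (k : ℕ) {x : ℝ} (hx : 0 < x + w.re) :
    Differentiable ℂ fun s => (Δ_[1])^[k] (lerchTerm w s) x :=
  differentiable_fwdDiff_iter_apply add_one_mem_setOf_pos_add_re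
    (fun _ hy => differentiable_lerchTerm hy) k hx

theorem exists_norm_fwdDiff_iter_lerchTerm_le (k : ℕ) (R : ℝ) :
    ∃ C, 0 ≤ C ∧ ∀ s : ℂ, ‖s‖ ≤ R → 0 ≤ s.re + k → ∀ x : ℝ, 0 < x + w.re →
      ‖(Δ_[1])^[k] (lerchTerm w s) x‖ ≤ C * (x + w.re) ^ (-(s.re + k)) := by
  induction k generalizing R with
  | zero =>
    refine ⟨Real.exp (Real.pi * R), (Real.exp_pos _).le, fun s hsR hs x hx => ?_⟩
    simp only [Function.iterate_zero_apply, Nat.cast_zero, add_zero] at hs ⊢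
    exact (norm_lerchTerm_le hs hx).trans (mul_le_mul_of_nonneg_right
      (Real.exp_le_exp.2 (by gcongr)) (Real.rpow_nonneg hx.le _))
  | succ k ih =>
    obtain ⟨C, hC0, hC⟩ := ih (R + 1)
    -- `|R|` rather than `R`, so that the constant is nonnegative even when `R < 0`
    refine ⟨|R| * C, by positivity, fun s hsR hs x hx => ?_⟩
    have hexp : (s + 1).re + k = s.re + ↑(k + 1) := by push_cast [add_re, one_re]; ring
    rw [Function.iterate_succ_apply']
    refine norm_fwdDiff_one_le
      (fun t ht => hasDerivAt_fwdDiff_iter_lerchTerm k s (by linarith [ht.1])) fun t ht => ?_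
    have hst : ‖s + 1‖ ≤ R + 1 := (norm_add_le _ _).trans (by simpa using hsR)
    calc ‖-s * (Δ_[1])^[k] (lerchTerm w (s + 1)) t‖
        = ‖s‖ * ‖(Δ_[1])^[k] (lerchTerm w (s + 1)) t‖ := by rw [norm_mul, norm_neg]
      _ ≤ |R| * (C * (t + w.re) ^ (-(s.re + ↑(k + 1)))) := by
          rw [← hexp]
          exact mul_le_mul (hsR.trans (le_abs_self R))
            (hC _ hst (hexp ▸ hs) t (by linarith [ht.1])) (norm_nonneg _) (abs_nonneg R)
      _ ≤ |R| * (C * (x + w.re) ^ (-(s.re + ↑(k + 1)))) := by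
          gcongr ?_ * (?_ * ?_)
          exact Real.rpow_le_rpow_of_nonpos hx (by linarith [ht.1]) (neg_nonpos.2 hs)
      _ = |R| * C * (x + w.re) ^ (-(s.re + ↑(k + 1))) := (mul_assoc _ _ _).symm

variable {θ : ℂ}

theorem summable_pow_mul_fwdDiff_iter_lerchTerm (hw : 0 < w.re) (hθ : ‖θ‖ ≤ 1) {k : ℕ} {s : ℂ}
    (hs : 1 < s.re + k) :
    Summable fun n : ℕ => θ ^ n * (Δ_[1])^[k] (lerchTerm w s) n := by
  obtain ⟨C, -, hC⟩ := exists_norm_fwdDiff_iter_lerchTerm_le (w := w) k ‖s‖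
  refine Summable.of_norm_bounded ((Real.summable_nat_add_rpow_neg hw hs).mul_left C) fun n => ?_
  exact (norm_pow_mul_le hθ n _).trans (hC s le_rfl (by linarith) n (by positivity))

theorem differentiableOn_tsum_pow_mul_fwdDiff_iter_lerchTerm (hw : 0 < w.re) (hθ : ‖θ‖ ≤ 1)
    {k : ℕ} {σ : ℝ} (hσ : 1 < σ + k) (R : ℝ) :
    DifferentiableOn ℂ (fun s => ∑' n : ℕ, θ ^ n * (Δ_[1])^[k] (lerchTerm w s) n)
      ({s | σ < s.re} ∩ Metric.ball 0 R) := by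
  obtain ⟨C, hC0, hC⟩ := exists_norm_fwdDiff_iter_lerchTerm_le (w := w) k R
  refine differentiableOn_tsum_of_summable_norm
    (((Real.summable_nat_add_rpow_neg hw (p := max σ R + k) (by linarith [le_max_left σ R])).add
      (Real.summable_nat_add_rpow_neg hw hσ)).mul_left C)
    (fun n => ((differentiable_fwdDiff_iter_lerchTerm k (by positivity)).const_mul _
      ).differentiableOn)
    ((isOpen_lt continuous_const continuous_re).inter Metric.isOpen_ball)
    fun n s ⟨(hσs : σ < s.re), hsR⟩ => ?_
  have hsR' : ‖s‖ < R := mem_ball_zero_iff.1 hsR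
  have hsσR : s.re ≤ max σ R := (re_le_norm s).trans (hsR'.le.trans (le_max_right σ R))
  calc ‖θ ^ n * (Δ_[1])^[k] (lerchTerm w s) n‖
      ≤ C * ((n : ℝ) + w.re) ^ (-(s.re + k)) :=
        (norm_pow_mul_le hθ n _).trans (hC s hsR'.le (by linarith) n (by positivity))
    _ ≤ C * (((n : ℝ) + w.re) ^ (-(max σ R + k)) + ((n : ℝ) + w.re) ^ (-(σ + k))) :=
        mul_le_mul_of_nonneg_left (Real.rpow_le_rpow_add_rpow (by positivity)
          (by linarith) (by linarith)) hC0

theorem differentiableOn_eulerTransform_lerchTerm (hw : 0 < w.re) (hθ : ‖θ‖ ≤ 1) (k : ℕ) :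
    DifferentiableOn ℂ (fun s => eulerTransform θ (lerchTerm w s) k) {s | 1 < s.re + k} := by
  have htsum : DifferentiableOn ℂ (fun s => ∑' n : ℕ, θ ^ n * (Δ_[1])^[k] (lerchTerm w s) n)
      {s | 1 < s.re + k} := fun s₀ (hs₀ : 1 < s₀.re + k) => by
    have hnhds : {s : ℂ | (s₀.re + 1 - k) / 2 < s.re} ∩ Metric.ball 0 (‖s₀‖ + 1) ∈ 𝓝 s₀ :=
      inter_mem ((isOpen_lt continuous_const continuous_re).mem_nhds (by simp; linarith))
        (Metric.isOpen_ball.mem_nhds (by simp))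
    exact ((differentiableOn_tsum_pow_mul_fwdDiff_iter_lerchTerm hw hθ (by linarith) _
      ).differentiableAt hnhds).differentiableWithinAt
  refine (Differentiable.differentiableOn ?_).add (htsum.const_mul _)
  exact Differentiable.fun_sum fun j _ =>
    (differentiable_fwdDiff_iter_lerchTerm j (by simpa using hw)).const_mul _

theorem eulerTransform_lerchTerm_eq (hw : 0 < w.re) (hθ : ‖θ‖ ≤ 1) (hθ1 : θ ≠ 1) {s : ℂ}
    {j k : ℕ} (hj : 1 < s.re + j) (hk : 1 < s.re + k) :
    eulerTransform θ (lerchTerm w s) j = eulerTransform θ (lerchTerm w s) k := by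
  wlog hjk : j ≤ k generalizing j k
  · exact (this hk hj (le_of_not_ge hjk)).symm
  refine (eulerTransform_eq_of_le hθ1 hjk fun i hi => ?_).symm
  have hji : (j : ℝ) ≤ i := by exact_mod_cast hi
  exact summable_pow_mul_fwdDiff_iter_lerchTerm hw hθ (by linarith)

end LerchTerm

theorem differentiable_of_differentiableOn_of_eqOn {𝕜 E ι : Type*} [NontriviallyNormedField 𝕜]
    [NormedAddCommGroup E] [NormedSpace 𝕜 E] {F : ι → 𝕜 → E} {U : ι → Set 𝕜}
    (hU : ∀ i, IsOpen (U i)) (hF : ∀ i, DifferentiableOn 𝕜 (F i) (U i))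
    (hFU : ∀ i j, ∀ x ∈ U i ∩ U j, F i x = F j x) (κ : 𝕜 → ι) (hκ : ∀ x, x ∈ U (κ x)) :
    Differentiable 𝕜 fun x => F (κ x) x := fun x₀ =>
  ((hF (κ x₀)).differentiableAt ((hU _).mem_nhds (hκ x₀))).congr_of_eventuallyEq <|
    eventually_of_mem ((hU _).mem_nhds (hκ x₀)) fun x hx => hFU _ _ x ⟨hκ x, hx⟩

theorem lerch_zeta_entire (w : ℂ) (hw : 0 < w.re) (θ : ℂ) (hθ : ‖θ‖ = 1) (hθ1 : θ ≠ 1) :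
    ∃ F : ℂ → ℂ, Differentiable ℂ F ∧
      ∀ s : ℂ, 1 < s.re → F s = ∑' n : ℕ, θ ^ n * ((n : ℂ) + w) ^ (-s) := by
  have hκ : ∀ s : ℂ, 1 < s.re + ↑(⌊1 - s.re⌋₊ + 1) := fun s => by
    push_cast; linarith [Nat.lt_floor_add_one (1 - s.re)]
  refine ⟨fun s => eulerTransform θ (lerchTerm w s) (⌊1 - s.re⌋₊ + 1),
    differentiable_of_differentiableOn_of_eqOn
      (fun k => isOpen_lt continuous_const (continuous_re.add continuous_const))
      (differentiableOn_eulerTransform_lerchTerm hw hθ.le)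
      (fun j k s hs => eulerTransform_lerchTerm_eq hw hθ.le hθ1 hs.1 hs.2) _ hκ,
    fun s hs => ?_⟩
  dsimp only
  rw [eulerTransform_lerchTerm_eq hw hθ.le hθ1 (hκ s) (k := 0) (by simpa using hs),
    eulerTransform_zero]
  rfl
end

section
/- Let a ∈ ℝ, k ∈ ℕ and s ∈ ℂ with Re s > 1/2, and set w := 2/(λ(1−x)) > 0. Then both of the following series converge absolutely, and Σ_{n=1}^∞ e^{2πina} · (2/(nλ(1−x)+2))^{2s} · (xₙ − 1)^k = (−1)^k · 2^{2s+k} · λ^{−(2s+k)} · (1−x)^{−2s} · Σ_{n=1}^∞ e^{2πina} (n+w)^{−(2s+k)}. (Closed-form evaluation, in terms of a Lerch zeta series, of the parabolic part of the fast transfer operator applied to the monomial (z−1)^k.) -/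
/-!
Writing `c = 1 - x` and `w = 2 / (λ c)`, the denominator factors as `nλc + 2 = c · λ(n + w)`
and `xₙ - 1 = -2c / (nλc + 2) = -2 / (λ(n + w))`. Hence the `n`-th term of the parabolic sum is
a constant multiple of `e^{2πina} (n + w)^{-(2s+k)}`, and both series are dominated by the
`p`-series with `p = 2 Re s + k > 1`.
-/

open Complex

lemma norm_exp_two_pi_I_mul_ofReal_mul (t a : ℝ) :
    ‖Complex.exp (2 * Real.pi * Complex.I * (t : ℂ) * (a : ℂ))‖ = 1 := by
  rw [show 2 * (Real.pi : ℂ) * I * t * a = ((2 * Real.pi * t * a : ℝ) : ℂ) * I by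
    push_cast; ring]
  exact norm_exp_ofReal_mul_I _

lemma summable_norm_ofReal_nat_add_cpow {b : ℝ} (hb : 0 < b) {z : ℂ} (hz : z.re < -1) :
    Summable (fun n : ℕ => ‖(((n : ℝ) + b : ℝ) : ℂ) ^ z‖) := by
  refine ((Real.summable_one_div_nat_add_rpow b (-z.re)).2 (by linarith)).congr fun n => ?_
  have hpos : 0 < (n : ℝ) + b := by positivity
  rw [norm_cpow_eq_rpow_re_of_pos hpos, abs_of_pos hpos, Real.rpow_neg hpos.le, one_div, inv_inv]

lemma ofReal_two_div_mul_cpow_mul_pow {c u : ℝ} (hc : 0 < c) (hu : 0 < u) (s : ℂ) (k : ℕ) :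
    (((2 / (c * u) : ℝ)) : ℂ) ^ (2 * s) * ((((-2 / u) ^ k : ℝ)) : ℂ)
      = (-1 : ℂ) ^ k * (2 : ℂ) ^ (2 * s + k) * (c : ℂ) ^ (-(2 * s)) *
          (u : ℂ) ^ (-(2 * s + k)) := by
  have hu0 : (u : ℂ) ≠ 0 := by exact_mod_cast hu.ne'
  have hweight : (((2 / (c * u) : ℝ)) : ℂ) ^ (2 * s)
      = (2 : ℂ) ^ (2 * s) * (c : ℂ) ^ (-(2 * s)) * (u : ℂ) ^ (-(2 * s)) := by
    rw [ofReal_div, div_cpow_ofReal_nonneg zero_le_two (by positivity), ofReal_mul,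
      mul_cpow_ofReal_nonneg hc.le hu.le, cpow_neg, cpow_neg, ofReal_ofNat]
    ring
  have hmonomial : ((((-2 / u) ^ k : ℝ)) : ℂ) = (-1 : ℂ) ^ k * (2 : ℂ) ^ (k : ℂ) *
      (u : ℂ) ^ (-(k : ℂ)) := by
    rw [cpow_neg, cpow_natCast, cpow_natCast]
    push_cast
    rw [div_pow, neg_pow]
    ring
  rw [hweight, hmonomial, cpow_add _ _ two_ne_zero, neg_add, cpow_add _ _ hu0]
  ring

lemma parabolic_denom_eq {lam x : ℝ} (hlam : lam ≠ 0) (hx : x ≠ 1) (t : ℝ) :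
    t * lam * (1 - x) + 2 = (1 - x) * (lam * (t + 2 / (lam * (1 - x)))) := by
  field_simp [sub_ne_zero.2 hx.symm]

lemma parabolic_orbit_sub_one {lam x t : ℝ} (hlam : lam ≠ 0) (hx : x ≠ 1)
    (h : t * lam * (1 - x) + 2 ≠ 0) :
    ((2 - t * lam) * x + t * lam) / (t * lam * (1 - x) + 2) - 1
      = -2 / (lam * (t + 2 / (lam * (1 - x)))) := by
  rw [div_sub_one h, show (2 - t * lam) * x + t * lam - (t * lam * (1 - x) + 2)
      = (1 - x) * -2 by ring, parabolic_denom_eq hlam hx,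
    mul_div_mul_left _ _ (sub_ne_zero.2 hx.symm)]

lemma parabolic_term_eq {lam x : ℝ} (hlam : 0 < lam) (hx : x < 1) {t : ℝ} (ht : 0 ≤ t)
    (s : ℂ) (k : ℕ) :
    (((2 / (t * lam * (1 - x) + 2)) : ℝ) : ℂ) ^ (2 * s) *
        (((((2 - t * lam) * x + t * lam) / (t * lam * (1 - x) + 2) - 1) ^ k : ℝ) : ℂ)
      = (-1 : ℂ) ^ k * (2 : ℂ) ^ (2 * s + k) * (lam : ℂ) ^ (-(2 * s + k)) *
          (((1 - x : ℝ)) : ℂ) ^ (-(2 * s)) *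
          (((t + 2 / (lam * (1 - x)) : ℝ)) : ℂ) ^ (-(2 * s + k)) := by
  have hc : 0 < 1 - x := by linarith
  have htw : 0 < t + 2 / (lam * (1 - x)) := by positivity
  rw [parabolic_orbit_sub_one hlam.ne' hx.ne (by positivity), parabolic_denom_eq hlam.ne' hx.ne,
    ofReal_two_div_mul_cpow_mul_pow hc (by positivity), ofReal_mul,
    mul_cpow_ofReal_nonneg hlam.le htw.le]
  ring

theorem parabolic_part_eq_lerch (lam : ℝ) (hlam : 0 < lam) (x : ℝ) (hx : x < 1)
    (a : ℝ) (k : ℕ) (s : ℂ) (hs : 1 / 2 < s.re) :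
    let xseq : ℕ → ℝ := fun n =>
      ((2 - (n : ℝ) * lam) * x + (n : ℝ) * lam) / ((n : ℝ) * lam * (1 - x) + 2)
    let w : ℝ := 2 / (lam * (1 - x))
    Summable (fun n : ℕ =>
      ‖Complex.exp (2 * Real.pi * Complex.I * ((n : ℂ) + 1) * (a : ℂ)) *
          (((2 / (((n : ℝ) + 1) * lam * (1 - x) + 2)) : ℝ) : ℂ) ^ (2 * s) *
          (((xseq (n + 1) - 1) ^ k : ℝ) : ℂ)‖) ∧
    Summable (fun n : ℕ =>
      ‖Complex.exp (2 * Real.pi * Complex.I * ((n : ℂ) + 1) * (a : ℂ)) *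
          ((((n : ℝ) + 1 + w) : ℝ) : ℂ) ^ (-(2 * s + (k : ℂ)))‖) ∧
    (∑' n : ℕ,
        Complex.exp (2 * Real.pi * Complex.I * ((n : ℂ) + 1) * (a : ℂ)) *
          (((2 / (((n : ℝ) + 1) * lam * (1 - x) + 2)) : ℝ) : ℂ) ^ (2 * s) *
          (((xseq (n + 1) - 1) ^ k : ℝ) : ℂ))
      = (-1 : ℂ) ^ k * (2 : ℂ) ^ (2 * s + (k : ℂ)) * ((lam : ℂ)) ^ (-(2 * s + (k : ℂ))) *
          (((1 - x : ℝ)) : ℂ) ^ (-(2 * s)) *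
          ∑' n : ℕ,
            Complex.exp (2 * Real.pi * Complex.I * ((n : ℂ) + 1) * (a : ℂ)) *
              ((((n : ℝ) + 1 + w) : ℝ) : ℂ) ^ (-(2 * s + (k : ℂ))) := by
  intro xseq w
  set C : ℂ := (-1 : ℂ) ^ k * (2 : ℂ) ^ (2 * s + (k : ℂ)) * ((lam : ℂ)) ^ (-(2 * s + (k : ℂ))) *
    (((1 - x : ℝ)) : ℂ) ^ (-(2 * s))
  set e : ℕ → ℂ := fun n => Complex.exp (2 * Real.pi * Complex.I * ((n : ℂ) + 1) * (a : ℂ))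
  set g : ℕ → ℂ := fun n => ((((n : ℝ) + 1 + w) : ℝ) : ℂ) ^ (-(2 * s + (k : ℂ)))
  have hterm : ∀ n : ℕ, e n * (((2 / (((n : ℝ) + 1) * lam * (1 - x) + 2)) : ℝ) : ℂ) ^ (2 * s) *
      (((xseq (n + 1) - 1) ^ k : ℝ) : ℂ) = C * (e n * g n) := fun n => by
    simp only [xseq, g, w, Nat.cast_add_one, add_assoc, mul_assoc (e n),
      parabolic_term_eq hlam hx (t := (n : ℝ) + 1) (by positivity)]
    ring
  have hnorm_e : ∀ n, ‖e n‖ = 1 := fun n => by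
    simpa using norm_exp_two_pi_I_mul_ofReal_mul ((n : ℝ) + 1) a
  have hg : Summable (fun n => ‖e n * g n‖) := by
    simp only [norm_mul, hnorm_e, one_mul, g, add_assoc]
    refine summable_norm_ofReal_nat_add_cpow (by positivity) ?_
    simp only [neg_re, add_re, mul_re, natCast_re]
    norm_num
    linarith [(k.cast_nonneg : (0 : ℝ) ≤ k)]
  refine ⟨(hg.mul_left ‖C‖).congr fun n => by rw [hterm]; exact (norm_mul _ _).symm, hg, ?_⟩
  rw [tsum_congr hterm, tsum_mul_left]
end

section
/- Let V be a complex normed space, B ≥ 0, and g : ℂ → V a function with ‖g(zₙ)‖ ≤ B for all n ≥ 1. Then for every s ∈ ℂ with Re s > 1/2 and every a ∈ ℝ, the series Σ_{n=1}^∞ e^{2πina} · (2/(nλ(1−z)+2))^{2s} · g(zₙ) converges absolutely in V. (Well-definedness of the parabolic part of the fast transfer operator on bounded holomorphic functions for Re s > 1/2.) -/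
/-!
Each term has norm at most `‖2 / Dₙ‖ ^ (2 Re s) · e^{π |Im 2s|} · B`, where
`Dₙ = nλ(1 − z) + 2`: the twist has modulus one and the principal branch costs at most
the factor `e^{π |Im 2s|}`. Since `Re Dₙ ≥ nλ(1 − Re z)`, this is `O(n^{-2 Re s})`, a
convergent `p`-series because `2 Re s > 1`.
-/

open Complex

theorem Complex.norm_cpow_le_rpow_mul_exp (x y : ℂ) :
    ‖x ^ y‖ ≤ ‖x‖ ^ y.re * Real.exp (Real.pi * |y.im|) := by
  refine (norm_cpow_le x y).trans ?_
  rw [div_eq_mul_inv, ← Real.exp_neg]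
  gcongr
  calc -(x.arg * y.im) ≤ |x.arg| * |y.im| := by rw [← abs_mul]; exact neg_le_abs _
    _ ≤ Real.pi * |y.im| := by gcongr; exact abs_arg_le_pi x

theorem Complex.norm_two_div_succ_mul_add_two_le {w : ℂ} (hw : 0 < w.re) (n : ℕ) :
    ‖2 / (((n : ℂ) + 1) * w + 2)‖ ≤ 2 / (((n : ℝ) + 1) * w.re) := by
  have hre : ((n : ℝ) + 1) * w.re ≤ (((n : ℂ) + 1) * w + 2).re := by simp
  rw [norm_div, Complex.norm_two]
  exact div_le_div_of_nonneg_left zero_le_two (by positivity) (hre.trans (re_le_norm _))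

theorem Complex.summable_norm_two_div_succ_mul_add_two_rpow {w : ℂ} (hw : 0 < w.re) {p : ℝ}
    (hp : 1 < p) : Summable fun n : ℕ => ‖2 / (((n : ℂ) + 1) * w + 2)‖ ^ p := by
  have hpseries : Summable fun n : ℕ => (((n : ℝ) + 1) ^ p)⁻¹ := by
    simpa using (summable_nat_add_iff 1).mpr (Real.summable_nat_rpow_inv.mpr hp)
  refine (hpseries.mul_left ((2 / w.re) ^ p)).of_nonneg_of_le (fun n => by positivity)
    fun n => ?_
  calc ‖2 / (((n : ℂ) + 1) * w + 2)‖ ^ p ≤ (2 / (((n : ℝ) + 1) * w.re)) ^ p := by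
        gcongr; exact norm_two_div_succ_mul_add_two_le hw n
    _ = (2 / w.re) ^ p * (((n : ℝ) + 1) ^ p)⁻¹ := by
        rw [div_mul_eq_div_div_swap, Real.div_rpow (by positivity) (by positivity),
          div_eq_mul_inv]

theorem parabolic_part_summable_of_bounded_general
    {V : Type} [NormedAddCommGroup V] [NormedSpace ℂ V]
    (lam : ℝ) (hlam : 0 < lam) (z : ℂ) (hz : z.re < 1)
    (B : ℝ) (g : ℂ → V)
    (hg : ∀ n : ℕ, 1 ≤ n →
      ‖g (((2 - (n : ℂ) * (lam : ℂ)) * z + (n : ℂ) * (lam : ℂ)) /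
            ((n : ℂ) * (lam : ℂ) * (1 - z) + 2))‖ ≤ B)
    (s : ℂ) (hs : 1 / 2 < s.re) (a : ℝ) :
    Summable (fun n : ℕ =>
      ‖(Complex.exp (2 * Real.pi * Complex.I * ((n : ℂ) + 1) * (a : ℂ)) *
            (2 / (((n : ℂ) + 1) * (lam : ℂ) * (1 - z) + 2)) ^ (2 * s)) •
          g (((2 - ((n : ℂ) + 1) * (lam : ℂ)) * z + ((n : ℂ) + 1) * (lam : ℂ)) /
              (((n : ℂ) + 1) * (lam : ℂ) * (1 - z) + 2))‖) := by
  have hw : 0 < ((lam : ℂ) * (1 - z)).re := by simpa using mul_pos hlam (sub_pos.mpr hz)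
  have hp : 1 < (2 * s).re := by simpa using (by linarith : (1 : ℝ) < 2 * s.re)
  refine ((summable_norm_two_div_succ_mul_add_two_rpow hw hp).mul_left
    (Real.exp (Real.pi * |(2 * s).im|) * B)).of_nonneg_of_le (fun n => norm_nonneg _)
    fun n => ?_
  have hgn := hg (n + 1) (Nat.le_add_left 1 n)
  push_cast at hgn
  have htwist : ‖exp (2 * Real.pi * I * ((n : ℂ) + 1) * a)‖ = 1 := by
    simp [norm_exp]
  rw [norm_smul, norm_mul, htwist, one_mul, ← mul_assoc]
  calc _ ≤ ‖2 / (((n : ℂ) + 1) * lam * (1 - z) + 2)‖ ^ (2 * s).re *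
          Real.exp (Real.pi * |(2 * s).im|) * B :=
        mul_le_mul (norm_cpow_le_rpow_mul_exp _ _) hgn (norm_nonneg _) (by positivity)
    _ = _ := by ring

theorem parabolic_part_summable_of_bounded
    {V : Type} [NormedAddCommGroup V] [NormedSpace ℂ V]
    (lam : ℝ) (hlam : 0 < lam) (z : ℂ) (hz : z.re < 1)
    (B : ℝ) (hB : 0 ≤ B) (g : ℂ → V)
    (hg : ∀ n : ℕ, 1 ≤ n →
      ‖g (((2 - (n : ℂ) * (lam : ℂ)) * z + (n : ℂ) * (lam : ℂ)) /
            ((n : ℂ) * (lam : ℂ) * (1 - z) + 2))‖ ≤ B)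
    (s : ℂ) (hs : 1 / 2 < s.re) (a : ℝ) :
    Summable (fun n : ℕ =>
      ‖(Complex.exp (2 * Real.pi * Complex.I * ((n : ℂ) + 1) * (a : ℂ)) *
            (2 / (((n : ℂ) + 1) * (lam : ℂ) * (1 - z) + 2)) ^ (2 * s)) •
          g (((2 - ((n : ℂ) + 1) * (lam : ℂ)) * z + ((n : ℂ) + 1) * (lam : ℂ)) /
              (((n : ℂ) + 1) * (lam : ℂ) * (1 - z) + 2))‖) :=
  parabolic_part_summable_of_bounded_general lam hlam z hz B g hg s hs a
end

section
/- Let V be a complex normed space, M ∈ ℕ, C ≥ 0, and g : ℂ → V a function with ‖g(zₙ)‖ ≤ C·|zₙ − 1|^{M+1} for all n ≥ 1. Then for every s ∈ ℂ with Re s > −M/2 and every a ∈ ℝ, the series Σ_{n=1}^∞ e^{2πina} · (2/(nλ(1−z)+2))^{2s} · g(zₙ) converges absolutely in V. (Convergence of the parabolic part of the fast transfer operator applied to functions vanishing to order M+1 at the parabolic fixed point, for Re s > −M/2.) -/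
/-!
With `dₙ = nλ(1 - z) + 2` one has `zₙ - 1 = (2 / dₙ) (z - 1)` and
`|dₙ| ≥ Re dₙ ≥ nλ(1 - Re z)`. The principal power satisfies
`|w ^ (2s)| ≤ |w| ^ (2 Re s) e^{π |Im 2s|}`, so the `n`-th term is at most a constant times
`|2 / dₙ| ^ (2 Re s + M + 1) = O(n ^ -(2 Re s + M + 1))`, and the exponent exceeds `1`
exactly when `Re s > -M/2`.
-/

open Complex Real

theorem Complex.norm_cpow_le_rpow_mul_exp_s10 (w s : ℂ) :
    ‖w ^ s‖ ≤ ‖w‖ ^ s.re * Real.exp (π * |s.im|) := by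
  calc ‖w ^ s‖ ≤ ‖w‖ ^ s.re / Real.exp (arg w * s.im) := norm_cpow_le w s
    _ = ‖w‖ ^ s.re * Real.exp (-(arg w * s.im)) := by rw [Real.exp_neg, div_eq_mul_inv]
    _ ≤ ‖w‖ ^ s.re * Real.exp (π * |s.im|) := by
      gcongr
      calc -(arg w * s.im) ≤ |arg w| * |s.im| := by rw [← abs_mul]; exact neg_le_abs _
        _ ≤ π * |s.im| := by gcongr; exact abs_arg_le_pi w

theorem norm_mul_cpow_smul_le {V : Type*} [NormedAddCommGroup V] [NormedSpace ℂ V]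
    {u w ξ s : ℂ} {v : V} {C : ℝ} {k : ℕ} (hu : ‖u‖ = 1) (hw : w ≠ 0)
    (hv : ‖v‖ ≤ C * ‖w * ξ‖ ^ k) :
    ‖(u * w ^ s) • v‖ ≤ Real.exp (π * |s.im|) * C * ‖ξ‖ ^ k * ‖w‖ ^ (s.re + k) := by
  calc ‖(u * w ^ s) • v‖ = ‖w ^ s‖ * ‖v‖ := by rw [norm_smul, norm_mul, hu, one_mul]
    _ ≤ ‖w‖ ^ s.re * Real.exp (π * |s.im|) * (C * ‖w * ξ‖ ^ k) :=
      mul_le_mul (norm_cpow_le_rpow_mul_exp_s10 w s) hv (norm_nonneg v) (by positivity)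
    _ = Real.exp (π * |s.im|) * C * ‖ξ‖ ^ k * ‖w‖ ^ (s.re + k) := by
      rw [Real.rpow_add_natCast (norm_ne_zero_iff.mpr hw), norm_mul, mul_pow]
      ring

theorem parabolic_mobius_sub_one {t z : ℂ} (h : t * (1 - z) + 2 ≠ 0) :
    ((2 - t) * z + t) / (t * (1 - z) + 2) - 1 = 2 / (t * (1 - z) + 2) * (z - 1) := by
  field_simp
  ring

theorem mul_one_sub_re_add_two_le_norm (x : ℝ) (z : ℂ) :
    x * (1 - z.re) + 2 ≤ ‖(x : ℂ) * (1 - z) + 2‖ := by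
  convert re_le_norm ((x : ℂ) * (1 - z) + 2) using 1
  simp

theorem mul_one_sub_add_two_ne_zero {x : ℝ} (hx : 0 ≤ x) {z : ℂ} (hz : z.re ≤ 1) :
    (x : ℂ) * (1 - z) + 2 ≠ 0 := by
  rw [← norm_pos_iff]
  nlinarith [mul_one_sub_re_add_two_le_norm x z]

theorem norm_two_div_mul_one_sub_add_two_le {x : ℝ} (hx : 0 < x) {z : ℂ} (hz : z.re < 1) :
    ‖2 / ((x : ℂ) * (1 - z) + 2)‖ ≤ 2 / (1 - z.re) * x⁻¹ := by
  have hpos : 0 < x * (1 - z.re) := mul_pos hx (by linarith)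
  calc ‖2 / ((x : ℂ) * (1 - z) + 2)‖ = 2 / ‖(x : ℂ) * (1 - z) + 2‖ := by
        rw [norm_div, Complex.norm_two]
    _ ≤ 2 / (x * (1 - z.re)) :=
      div_le_div_of_nonneg_left zero_le_two hpos
        (by linarith [mul_one_sub_re_add_two_le_norm x z])
    _ = 2 / (1 - z.re) * x⁻¹ := by field_simp

theorem summable_norm_two_div_parabolic_denom_rpow {lam : ℝ} (hlam : 0 < lam) {z : ℂ}
    (hz : z.re < 1) {p : ℝ} (hp : 1 < p) :
    Summable fun n : ℕ => ‖2 / (((n : ℂ) + 1) * lam * (1 - z) + 2)‖ ^ p := by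
  have hshift : Summable fun n : ℕ => ((n : ℝ) + 1) ^ (-p) := by
    simpa using
      (summable_nat_add_iff 1).mpr (Real.summable_nat_rpow.mpr (by linarith : -p < -1))
  refine Summable.of_nonneg_of_le (fun n => by positivity) (fun n => ?_)
    (hshift.mul_left ((2 / (lam * (1 - z.re))) ^ p))
  have hx : (0 : ℝ) < (n + 1) * lam := by positivity
  have hn : (0 : ℝ) < n + 1 := by positivity
  calc ‖2 / (((n : ℂ) + 1) * lam * (1 - z) + 2)‖ ^ p
      ≤ (2 / (1 - z.re) * ((n + 1) * lam)⁻¹) ^ p := by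
        gcongr
        exact_mod_cast norm_two_div_mul_one_sub_add_two_le hx hz
    _ = (2 / (lam * (1 - z.re))) ^ p * ((n : ℝ) + 1) ^ (-p) := by
        rw [Real.rpow_neg hn.le, ← Real.inv_rpow hn.le,
          ← Real.mul_rpow (by positivity) (by positivity)]
        congr 1
        field_simp

theorem parabolic_part_summable_of_vanishing_general
    {V : Type} [NormedAddCommGroup V] [NormedSpace ℂ V]
    (lam : ℝ) (hlam : 0 < lam) (z : ℂ) (hz : z.re < 1)
    (M : ℕ) (C : ℝ) (g : ℂ → V)
    (hg : ∀ n : ℕ, 1 ≤ n →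
      ‖g (((2 - (n : ℂ) * (lam : ℂ)) * z + (n : ℂ) * (lam : ℂ)) /
            ((n : ℂ) * (lam : ℂ) * (1 - z) + 2))‖ ≤
        C * ‖((2 - (n : ℂ) * (lam : ℂ)) * z + (n : ℂ) * (lam : ℂ)) /
              ((n : ℂ) * (lam : ℂ) * (1 - z) + 2) - 1‖ ^ (M + 1))
    (s : ℂ) (hs : -(M : ℝ) / 2 < s.re) (a : ℝ) :
    Summable (fun n : ℕ =>
      ‖(Complex.exp (2 * Real.pi * Complex.I * ((n : ℂ) + 1) * (a : ℂ)) *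
            (2 / (((n : ℂ) + 1) * (lam : ℂ) * (1 - z) + 2)) ^ (2 * s)) •
          g (((2 - ((n : ℂ) + 1) * (lam : ℂ)) * z + ((n : ℂ) + 1) * (lam : ℂ)) /
              (((n : ℂ) + 1) * (lam : ℂ) * (1 - z) + 2))‖) := by
  have hp : 1 < (2 * s).re + ((M + 1 : ℕ) : ℝ) := by
    push_cast
    simp only [mul_re, re_ofNat, im_ofNat, zero_mul, sub_zero]
    linarith
  refine Summable.of_nonneg_of_le (fun _ => norm_nonneg _) (fun n => ?_)
    ((summable_norm_two_div_parabolic_denom_rpow hlam hz hp).mul_left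
      (Real.exp (π * |(2 * s).im|) * C * ‖z - 1‖ ^ (M + 1)))
  have hd : ((n : ℂ) + 1) * lam * (1 - z) + 2 ≠ 0 := by
    exact_mod_cast mul_one_sub_add_two_ne_zero (x := (n + 1) * lam) (by positivity) hz.le
  have hgn := hg (n + 1) n.succ_pos
  push_cast at hgn
  rw [parabolic_mobius_sub_one hd] at hgn
  have hu : ‖Complex.exp (2 * π * I * ((n : ℂ) + 1) * a)‖ = 1 := by
    rw [norm_exp]; simp
  exact norm_mul_cpow_smul_le hu (div_ne_zero two_ne_zero hd) hgn

theorem parabolic_part_summable_of_vanishing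
    {V : Type} [NormedAddCommGroup V] [NormedSpace ℂ V]
    (lam : ℝ) (hlam : 0 < lam) (z : ℂ) (hz : z.re < 1)
    (M : ℕ) (C : ℝ) (hC : 0 ≤ C) (g : ℂ → V)
    (hg : ∀ n : ℕ, 1 ≤ n →
      ‖g (((2 - (n : ℂ) * (lam : ℂ)) * z + (n : ℂ) * (lam : ℂ)) /
            ((n : ℂ) * (lam : ℂ) * (1 - z) + 2))‖ ≤
        C * ‖((2 - (n : ℂ) * (lam : ℂ)) * z + (n : ℂ) * (lam : ℂ)) /
              ((n : ℂ) * (lam : ℂ) * (1 - z) + 2) - 1‖ ^ (M + 1))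
    (s : ℂ) (hs : -(M : ℝ) / 2 < s.re) (a : ℝ) :
    Summable (fun n : ℕ =>
      ‖(Complex.exp (2 * Real.pi * Complex.I * ((n : ℂ) + 1) * (a : ℂ)) *
            (2 / (((n : ℂ) + 1) * (lam : ℂ) * (1 - z) + 2)) ^ (2 * s)) •
          g (((2 - ((n : ℂ) + 1) * (lam : ℂ)) * z + ((n : ℂ) + 1) * (lam : ℂ)) /
              (((n : ℂ) + 1) * (lam : ℂ) * (1 - z) + 2))‖) :=
  parabolic_part_summable_of_vanishing_general lam hlam z hz M C g hg s hs a
end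

section
/- For all f₁ : (−1,∞) → V, f₂ : (−∞,1) → V, all s ∈ ℂ and all x in the respective domains, the slow transfer operator commutes with the J-symmetry: χ(J)·(Lf)₂(−x) = (L(𝒥f))₁(x) for every x ∈ (−1,∞), and χ(J)·(Lf)₁(−x) = (L(𝒥f))₂(x) for every x ∈ (−∞,1). Equivalently, 𝒥 ∘ L = L ∘ 𝒥. -/
/-!
STATEMENT 12: The slow transfer operator of a non-cofinite Hecke triangle group
`Γ_λ` (λ > 2) commutes with the symmetry operator `𝒥` induced by `J = [[−1,0],[0,1]]`:
`𝒥 ∘ L = L ∘ 𝒥`.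
-/

open Matrix Complex

noncomputable section

def SmatGL : GL (Fin 2) ℝ :=
  Matrix.GeneralLinearGroup.mkOfDetNeZero !![0, 1; -1, 0] (by norm_num [Matrix.det_fin_two_of])

def TmatGL (lam : ℝ) : GL (Fin 2) ℝ :=
  Matrix.GeneralLinearGroup.mkOfDetNeZero !![1, lam; 0, 1] (by norm_num [Matrix.det_fin_two_of])

def JmatGL : GL (Fin 2) ℝ :=
  Matrix.GeneralLinearGroup.mkOfDetNeZero !![-1, 0; 0, 1] (by norm_num [Matrix.det_fin_two_of])

/-- The subgroup of `GL(2,ℝ)` generated by `S`, `T_λ` and `J`. -/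
def HeckeTildeJ (lam : ℝ) : Subgroup (GL (Fin 2) ℝ) :=
  Subgroup.closure {SmatGL, TmatGL lam, JmatGL}

def SelJ (lam : ℝ) : HeckeTildeJ lam := ⟨SmatGL, Subgroup.subset_closure (by simp)⟩
def a1 (lam : ℝ) : HeckeTildeJ lam := ⟨TmatGL lam, Subgroup.subset_closure (by simp)⟩
def Jel (lam : ℝ) : HeckeTildeJ lam := ⟨JmatGL, Subgroup.subset_closure (by simp)⟩
def a2 (lam : ℝ) : HeckeTildeJ lam := (a1 lam)⁻¹ * SelJ lam
def a3 (lam : ℝ) : HeckeTildeJ lam := a1 lam * SelJ lam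

/- ### Auxiliary group-level lemmas -/

lemma SmatGL_sq : SmatGL * SmatGL = (-1 : GL (Fin 2) ℝ) := by
  apply Units.ext
  show (!![0,1;-1,0] * !![0,1;-1,0] : Matrix (Fin 2) (Fin 2) ℝ) = -(1 : Matrix (Fin 2) (Fin 2) ℝ)
  ext i j
  fin_cases i <;> fin_cases j <;> norm_num [Matrix.mul_fin_two, Matrix.one_fin_two]

lemma JmatGL_sq : JmatGL * JmatGL = (1 : GL (Fin 2) ℝ) := by
  apply Units.ext
  show (!![-1,0;0,1] * !![-1,0;0,1] : Matrix (Fin 2) (Fin 2) ℝ) = (1 : Matrix (Fin 2) (Fin 2) ℝ)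
  ext i j
  fin_cases i <;> fin_cases j <;> norm_num [Matrix.mul_fin_two, Matrix.one_fin_two]

lemma TJT_GL (lam : ℝ) : TmatGL lam * (JmatGL * TmatGL lam) = JmatGL := by
  apply Units.ext
  show (!![1,lam;0,1] * (!![-1,0;0,1] * !![1,lam;0,1]) : Matrix (Fin 2) (Fin 2) ℝ)
      = !![-1,0;0,1]
  ext i j
  fin_cases i <;> fin_cases j <;> norm_num [Matrix.mul_fin_two]

lemma TJTS_GL (lam : ℝ) :
    TmatGL lam * (JmatGL * (TmatGL lam * SmatGL))
      = (-1 : GL (Fin 2) ℝ) * (SmatGL * JmatGL) := by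
  apply Units.ext
  show (!![1,lam;0,1] * (!![-1,0;0,1] * (!![1,lam;0,1] * !![0,1;-1,0])) : Matrix (Fin 2) (Fin 2) ℝ)
      = -(1 : Matrix (Fin 2) (Fin 2) ℝ) * (!![0,1;-1,0] * !![-1,0;0,1])
  ext i j
  fin_cases i <;> fin_cases j <;> norm_num [Matrix.mul_fin_two, Matrix.one_fin_two]

lemma negMem (lam : ℝ) : (-1 : GL (Fin 2) ℝ) ∈ HeckeTildeJ lam := by
  have hS : SmatGL ∈ HeckeTildeJ lam := Subgroup.subset_closure (by simp)
  have h : SmatGL * SmatGL ∈ HeckeTildeJ lam := mul_mem hS hS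
  rwa [SmatGL_sq] at h

lemma Jel_sq (lam : ℝ) : Jel lam * Jel lam = 1 :=
  Subtype.ext JmatGL_sq

lemma rel_TJT (lam : ℝ) : a1 lam * (Jel lam * a1 lam) = Jel lam :=
  Subtype.ext (TJT_GL lam)

lemma rel_TJTS (lam : ℝ) :
    a1 lam * (Jel lam * a3 lam)
      = (⟨-1, negMem lam⟩ : HeckeTildeJ lam) * (SelJ lam * Jel lam) :=
  Subtype.ext (TJTS_GL lam)

theorem slowTO_J_equivariant (lam : ℝ) (hlam : 2 < lam)
    {V : Type} [NormedAddCommGroup V] [InnerProductSpace ℂ V] [FiniteDimensional ℂ V]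
    (χ : HeckeTildeJ lam →* (V ≃ₗᵢ[ℂ] V))
    (hχneg : ∀ h : (-1 : GL (Fin 2) ℝ) ∈ HeckeTildeJ lam, χ ⟨-1, h⟩ = 1)
    (s : ℂ) (f₁ f₂ : ℝ → V) :
    let L1 : (ℝ → V) → (ℝ → V) → ℝ → V := fun g₁ g₂ x =>
      ((((x + lam) ^ 2 : ℝ) : ℂ) ^ (-s)) •
          χ (a2 lam) (g₁ (-1 / (x + lam)) + g₂ (-1 / (x + lam)))
        + χ ((a1 lam)⁻¹) (g₁ (x + lam))
    let L2 : (ℝ → V) → (ℝ → V) → ℝ → V := fun g₁ g₂ x =>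
      ((((lam - x) ^ 2 : ℝ) : ℂ) ^ (-s)) •
          χ (a3 lam) (g₁ (1 / (lam - x)) + g₂ (1 / (lam - x)))
        + χ (a1 lam) (g₂ (x - lam))
    let Jf₁ : ℝ → V := fun x => χ (Jel lam) (f₂ (-x))
    let Jf₂ : ℝ → V := fun x => χ (Jel lam) (f₁ (-x))
    (∀ x : ℝ, -1 < x → χ (Jel lam) (L2 f₁ f₂ (-x)) = L1 Jf₁ Jf₂ x) ∧
    (∀ x : ℝ, x < 1 → χ (Jel lam) (L1 f₁ f₂ (-x)) = L2 Jf₁ Jf₂ x) := by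
  intro L1 L2 Jf₁ Jf₂
  set u := χ (Jel lam) with hu
  have hneg : χ ⟨-1, negMem lam⟩ = 1 := hχneg _
  have hu2 : u * u = 1 := by rw [hu, ← _root_.map_mul, Jel_sq, _root_.map_one]
  -- χ(a2) * u = u * χ(a3)
  have h1 : χ (a2 lam) * u = u * χ (a3 lam) := by
    have h := congrArg χ (rel_TJTS lam)
    simp only [_root_.map_mul] at h
    rw [hneg, one_mul, ← hu] at h
    have ha2 : χ (a2 lam) = (χ (a1 lam))⁻¹ * χ (SelJ lam) := by
      rw [a2, _root_.map_mul, map_inv]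
    calc χ (a2 lam) * u = ((χ (a1 lam))⁻¹ * χ (SelJ lam)) * u := by rw [ha2]
      _ = (χ (a1 lam))⁻¹ * (χ (SelJ lam) * u) := mul_assoc _ _ _
      _ = (χ (a1 lam))⁻¹ * (χ (a1 lam) * (u * χ (a3 lam))) := by rw [← h]
      _ = u * χ (a3 lam) := inv_mul_cancel_left _ _
  -- χ(a1⁻¹) * u = u * χ(a1)
  have h3 : χ ((a1 lam)⁻¹) * u = u * χ (a1 lam) := by
    have h := congrArg χ (rel_TJT lam)
    simp only [_root_.map_mul] at h
    rw [← hu] at h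
    calc χ ((a1 lam)⁻¹) * u = (χ (a1 lam))⁻¹ * u := by rw [map_inv]
      _ = (χ (a1 lam))⁻¹ * (χ (a1 lam) * (u * χ (a1 lam))) := by rw [h]
      _ = u * χ (a1 lam) := inv_mul_cancel_left _ _
  -- χ(a3) * u = u * χ(a2)
  have h2 : χ (a3 lam) * u = u * χ (a2 lam) := by
    have e : χ (a3 lam) = u * (χ (a2 lam) * u) := by
      rw [h1, ← mul_assoc, hu2, one_mul]
    rw [e, mul_assoc, mul_assoc, hu2, mul_one]
  -- χ(a1) * u = u * χ(a1⁻¹)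
  have h4 : χ (a1 lam) * u = u * χ ((a1 lam)⁻¹) := by
    have e : χ (a1 lam) = u * (χ ((a1 lam)⁻¹) * u) := by
      rw [h3, ← mul_assoc, hu2, one_mul]
    rw [e, mul_assoc, mul_assoc, hu2, mul_one]
  have key1 : ∀ v : V, u (χ (a3 lam) v) = χ (a2 lam) (u v) := by
    intro v
    calc u (χ (a3 lam) v) = (u * χ (a3 lam)) v := rfl
      _ = (χ (a2 lam) * u) v := by rw [h1]
      _ = χ (a2 lam) (u v) := rfl
  have key2 : ∀ v : V, u (χ (a2 lam) v) = χ (a3 lam) (u v) := by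
    intro v
    calc u (χ (a2 lam) v) = (u * χ (a2 lam)) v := rfl
      _ = (χ (a3 lam) * u) v := by rw [h2]
      _ = χ (a3 lam) (u v) := rfl
  have key3 : ∀ v : V, u (χ (a1 lam) v) = χ ((a1 lam)⁻¹) (u v) := by
    intro v
    calc u (χ (a1 lam) v) = (u * χ (a1 lam)) v := rfl
      _ = (χ ((a1 lam)⁻¹) * u) v := by rw [h3]
      _ = χ ((a1 lam)⁻¹) (u v) := rfl
  have key4 : ∀ v : V, u (χ ((a1 lam)⁻¹) v) = χ (a1 lam) (u v) := by
    intro v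
    calc u (χ ((a1 lam)⁻¹) v) = (u * χ ((a1 lam)⁻¹)) v := rfl
      _ = (χ (a1 lam) * u) v := by rw [h4]
      _ = χ (a1 lam) (u v) := rfl
  constructor
  · intro x hx
    simp only [L1, L2, Jf₁, Jf₂]
    have e1 : lam - -x = x + lam := by ring
    have e2 : (-x : ℝ) - lam = -(x + lam) := by ring
    have e3 : -(-1 / (x + lam)) = 1 / (x + lam) := by ring
    rw [e1, e2, e3]
    rw [map_add u, LinearIsometryEquiv.map_smul, key1, key3, map_add u,
      add_comm (u (f₁ (1 / (x + lam)))) (u (f₂ (1 / (x + lam))))]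
  · intro x hx
    simp only [L1, L2, Jf₁, Jf₂]
    have e1 : (-x : ℝ) + lam = lam - x := by ring
    have e2 : -(1 / (lam - x)) = -1 / (lam - x) := by ring
    have e3 : -(x - lam) = lam - x := by ring
    rw [e1, e2, e3]
    rw [map_add u, LinearIsometryEquiv.map_smul, key2, key4, map_add u,
      add_comm (u (f₁ (-1 / (lam - x)))) (u (f₂ (-1 / (lam - x))))]
end
end

section
/- For every f : (0,∞) → V, every s ∈ ℂ and every x > 0 such that for each k ∈ {1,…,q−1} the Möbius transformations g_k⁻¹ are defined (nonvanishing denominator) at both x and 1/x, the slow transfer operator commutes with the exterior symmetry Q: α_s(Q)(L_{s,χ}f)(x) = L_{s,χ}(α_s(Q)f)(x), where α_s(Q)f(y) := (y²)^(−s) χ(Q) f(1/y) for y > 0. -/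
/-!
Write `M = T_λ S`, so that `g_k⁻¹ = M^k S`. Conjugation by `Q` inverts both `M` and `S`, and
`λ = 2cos(π/q)` forces `M^q = (-1)^(q+1)` through the sine recursion
`sin((n+2)θ) = 2cos θ sin((n+1)θ) - sin(nθ)`. Hence `Q g_k⁻¹ Q = ±g_{q-k}⁻¹`. As `χ(-1) = 1`,
`χ(Q)` intertwines `χ(g_k)` with `χ(g_{q-k})`, and as `Q` acts by `x ↦ 1/x`, the Möbius
points and automorphy factors of the `k`-th term of `α_s(Q) L f` are those of the `(q-k)`-th
term of `L α_s(Q) f`. Reindexing the sum by `k ↦ q - k` gives the identity.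
-/

open Matrix Complex

noncomputable section

def QmatGL : GL (Fin 2) ℝ :=
  Matrix.GeneralLinearGroup.mkOfDetNeZero !![0, 1; 1, 0] (by norm_num [Matrix.det_fin_two_of])

/-- The subgroup `Γ̃_λ` of `GL(2,ℝ)` generated by `S`, `T_λ` and `Q`. -/
def HeckeTildeQ (lam : ℝ) : Subgroup (GL (Fin 2) ℝ) :=
  Subgroup.closure {SmatGL, TmatGL lam, QmatGL}

def SelQ (lam : ℝ) : HeckeTildeQ lam := ⟨SmatGL, Subgroup.subset_closure (by simp)⟩
def TelQ (lam : ℝ) : HeckeTildeQ lam := ⟨TmatGL lam, Subgroup.subset_closure (by simp)⟩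
def Qel (lam : ℝ) : HeckeTildeQ lam := ⟨QmatGL, Subgroup.subset_closure (by simp)⟩

/-- The elements `g_k = ((T_λ S)^k S)⁻¹`. -/
def gkQ (lam : ℝ) (k : ℕ) : HeckeTildeQ lam := ((TelQ lam * SelQ lam) ^ k * SelQ lam)⁻¹

/-- Möbius action of `g ∈ GL(2,ℝ)` on `ℝ` (where the denominator is nonzero). -/
def moebGL (g : GL (Fin 2) ℝ) (x : ℝ) : ℝ :=
  ((g : Matrix (Fin 2) (Fin 2) ℝ) 0 0 * x + (g : Matrix (Fin 2) (Fin 2) ℝ) 0 1) /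
    ((g : Matrix (Fin 2) (Fin 2) ℝ) 1 0 * x + (g : Matrix (Fin 2) (Fin 2) ℝ) 1 1)

/-- The denominator `cx + d` of the Möbius action. -/
def denomGL (g : GL (Fin 2) ℝ) (x : ℝ) : ℝ :=
  (g : Matrix (Fin 2) (Fin 2) ℝ) 1 0 * x + (g : Matrix (Fin 2) (Fin 2) ℝ) 1 1

/-- `j_s(g,x) = (|det g|·(cx+d)^{−2})^s`, principal complex power of a positive real. -/
def jGL (s : ℂ) (g : GL (Fin 2) ℝ) (x : ℝ) : ℂ :=
  (((|(g : Matrix (Fin 2) (Fin 2) ℝ).det| * ((denomGL g x) ^ 2)⁻¹) : ℝ) : ℂ) ^ s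

theorem sin_smul_pow_succ_of_mul_self_eq {A : Type*} [Ring A] [Algebra ℝ A] {a : A} {θ : ℝ}
    (ha : a * a = (2 * Real.cos θ) • a - 1) (n : ℕ) :
    Real.sin θ • a ^ (n + 1) = Real.sin ((n + 1) * θ) • a - Real.sin (n * θ) • (1 : A) := by
  induction n with
  | zero => simp
  | succ n ih =>
    have hsin : Real.sin ((n + 1 + 1) * θ)
        = 2 * Real.cos θ * Real.sin ((n + 1) * θ) - Real.sin (n * θ) := by
      have h₁ : ((n : ℝ) + 1 + 1) * θ = (n + 1) * θ + θ := by ring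
      have h₂ : (n : ℝ) * θ = (n + 1) * θ - θ := by ring
      rw [h₁, h₂, Real.sin_add, Real.sin_sub]; ring
    calc Real.sin θ • a ^ (n + 1 + 1) = a * (Real.sin θ • a ^ (n + 1)) := by
          rw [pow_succ', mul_smul_comm]
      _ = _ := by
          push_cast
          rw [ih, mul_sub, mul_smul_comm, mul_smul_comm, ha, hsin, mul_one, smul_sub, smul_smul,
            sub_smul, mul_comm (Real.sin _)]
          abel

theorem pow_eq_neg_one_of_mul_self_eq {A : Type*} [Ring A] [Algebra ℝ A] {a : A} {q : ℕ}
    (hq : 2 ≤ q) (ha : a * a = (2 * Real.cos (Real.pi / q)) • a - 1) : a ^ q = -1 := by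
  have hsin : Real.sin (Real.pi / q) ≠ 0 := by
    refine (Real.sin_pos_of_pos_of_lt_pi (by positivity) ?_).ne'
    exact div_lt_self Real.pi_pos (by exact_mod_cast hq)
  have h := sin_smul_pow_succ_of_mul_self_eq ha (q - 1)
  have hq' : ((q - 1 : ℕ) : ℝ) + 1 = q := by rw [Nat.cast_sub (by omega)]; ring
  rw [Nat.sub_add_cancel (by omega), hq', mul_div_cancel₀ _ (by positivity), Real.sin_pi,
    zero_smul, zero_sub, Nat.cast_sub (by omega), Nat.cast_one, sub_one_mul,
    mul_div_cancel₀ _ (by positivity), Real.sin_pi_sub, ← smul_neg] at h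
  exact smul_right_injective A hsin h

theorem eq_or_eq_neg_of_eq_neg_one_pow_mul {M : Type*} [Monoid M] [HasDistribNeg M] {a b : M}
    {n : ℕ} (h : b = (-1) ^ n * a) : b = a ∨ b = -a := by
  rcases neg_one_pow_eq_or M n with hn | hn <;> simp [h, hn]

theorem map_mul_comm_of_inv_eq_mul_conj {G H : Type*} [Group G] [Group H] (φ : G →* H)
    {u a b z : G} (hu : u * u = 1) (hz : φ z = 1) (h : b⁻¹ = z * (u * a⁻¹ * u)) :
    φ u * φ a = φ b * φ u := by
  have hU : φ u * φ u = 1 := by rw [← map_mul, hu, map_one]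
  have hUinv : (φ u)⁻¹ = φ u := inv_eq_of_mul_eq_one_right hU
  have hb : φ b = φ u * φ a * φ u := by
    rw [← inv_inv (φ b), ← map_inv, h, map_mul, hz, one_mul, map_mul, map_mul, map_inv]
    simp only [_root_.mul_inv_rev, inv_inv, hUinv, mul_assoc]
  rw [hb, mul_assoc, hU, mul_one]

-- `e` and `n` stand for the denominators of `g` at `1 / x` and of `QgQ` at `x`, so that
-- `(QgQ)·x = x e / n`.
theorem ofReal_cpow_mul_inv_sq_eq (s : ℂ) {x D e n : ℝ} (hD : 0 ≤ D) (hn : n ≠ 0) :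
    ((x ^ 2 : ℝ) : ℂ) ^ (-s) * ((D * (e ^ 2)⁻¹ : ℝ) : ℂ) ^ s
      = ((D * (n ^ 2)⁻¹ : ℝ) : ℂ) ^ s * (((x * e / n) ^ 2 : ℝ) : ℂ) ^ (-s) := by
  have hmul : ∀ a b : ℝ, 0 ≤ a → 0 ≤ b → ((a * b : ℝ) : ℂ) ^ s = (a : ℂ) ^ s * (b : ℂ) ^ s :=
    fun a b ha hb => by rw [ofReal_mul, mul_cpow_ofReal_nonneg ha hb]
  have hinv : ∀ a : ℝ, 0 ≤ a → ((a⁻¹ : ℝ) : ℂ) ^ s = ((a : ℂ) ^ s)⁻¹ :=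
    fun a ha => by rw [ofReal_inv, inv_cpow_ofReal_nonneg ha]
  have hne : ((n ^ 2 : ℝ) : ℂ) ^ s ≠ 0 := by simp [cpow_eq_zero_iff, hn]
  have hsq : (x * e / n) ^ 2 = x ^ 2 * e ^ 2 * (n ^ 2)⁻¹ := by ring
  rw [hsq, cpow_neg, cpow_neg, hmul _ _ hD (by positivity),
    hmul _ _ hD (by positivity), hmul _ _ (by positivity) (by positivity),
    hmul _ _ (by positivity) (by positivity), hinv _ (by positivity), hinv _ (by positivity)]
  field_simp

section HeckeRelations

variable (lam : ℝ)

theorem QmatGL_mul_self : QmatGL * QmatGL = 1 := by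
  ext i j; fin_cases i <;> fin_cases j <;> simp [QmatGL, Matrix.mul_apply, Fin.sum_univ_two]

theorem QmatGL_mul_SmatGL_mul_QmatGL : QmatGL * SmatGL * QmatGL = -SmatGL := by
  ext i j; fin_cases i <;> fin_cases j <;>
    simp [QmatGL, SmatGL, Matrix.mul_apply, Fin.sum_univ_two]

theorem QmatGL_mul_TmatGL_mul_SmatGL_mul_QmatGL :
    QmatGL * (TmatGL lam * SmatGL) * QmatGL = (TmatGL lam * SmatGL)⁻¹ := by
  refine eq_inv_of_mul_eq_one_left ?_
  ext i j; fin_cases i <;> fin_cases j <;>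
    simp [QmatGL, SmatGL, TmatGL, Matrix.mul_apply, Fin.sum_univ_two]

theorem TmatGL_mul_SmatGL_pow {q : ℕ} (hq : 2 ≤ q) (hlam : lam = 2 * Real.cos (Real.pi / q)) :
    (TmatGL lam * SmatGL) ^ q = (-1) ^ (q + 1) := by
  have ha : (!![lam, -1; 1, 0] : Matrix (Fin 2) (Fin 2) ℝ) * !![lam, -1; 1, 0]
      = (2 * Real.cos (Real.pi / q)) • !![lam, -1; 1, 0] - 1 := by
    rw [← hlam, Matrix.mul_fin_two, Matrix.one_fin_two]
    ext i j; fin_cases i <;> fin_cases j <;> simp [sub_eq_add_neg]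
  have hTS : ((TmatGL lam * SmatGL : GL (Fin 2) ℝ) : Matrix (Fin 2) (Fin 2) ℝ)
      = -!![lam, -1; 1, 0] := by
    ext i j; fin_cases i <;> fin_cases j <;> simp [SmatGL, TmatGL, Matrix.mul_apply]
  ext1
  rw [Units.val_pow_eq_pow_val, hTS, neg_pow, pow_eq_neg_one_of_mul_self_eq hq ha]
  simp [pow_succ]

theorem TmatGL_mul_SmatGL_pow_sub_mul_SmatGL {q k : ℕ} (hq : 2 ≤ q)
    (hlam : lam = 2 * Real.cos (Real.pi / q)) (hk : k ≤ q) :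
    (TmatGL lam * SmatGL) ^ (q - k) * SmatGL
      = (-1) ^ q * (QmatGL * ((TmatGL lam * SmatGL) ^ k * SmatGL) * QmatGL) := by
  set M := TmatGL lam * SmatGL
  have hQinv : QmatGL⁻¹ = QmatGL := inv_eq_of_mul_eq_one_right QmatGL_mul_self
  have hconj : QmatGL * (M ^ k * SmatGL) * QmatGL = (M ^ k)⁻¹ * -SmatGL := by
    calc QmatGL * (M ^ k * SmatGL) * QmatGL
        = QmatGL * M ^ k * QmatGL⁻¹ * (QmatGL * SmatGL * QmatGL) := by group
      _ = (M ^ k)⁻¹ * -SmatGL := by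
        rw [← conj_pow, hQinv, QmatGL_mul_TmatGL_mul_SmatGL_mul_QmatGL,
          QmatGL_mul_SmatGL_mul_QmatGL, inv_pow]
  rw [hconj, pow_sub _ hk, TmatGL_mul_SmatGL_pow lam hq hlam]
  simp [pow_succ, mul_assoc]

theorem val_gkQ_inv (k : ℕ) :
    (((gkQ lam k)⁻¹ : HeckeTildeQ lam) : GL (Fin 2) ℝ)
      = (TmatGL lam * SmatGL) ^ k * SmatGL := by
  simp [gkQ, TelQ, SelQ]

theorem neg_one_mem_HeckeTildeQ : (-1 : GL (Fin 2) ℝ) ∈ HeckeTildeQ lam := by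
  have hS : SmatGL * SmatGL = -1 := by
    ext i j; fin_cases i <;> fin_cases j <;> simp [SmatGL, Matrix.mul_apply]
  exact hS ▸ mul_mem (SelQ lam).2 (SelQ lam).2

theorem Qel_mul_self : Qel lam * Qel lam = 1 := Subtype.ext QmatGL_mul_self

theorem gkQ_sub_inv {q k : ℕ} (hq : 2 ≤ q) (hlam : lam = 2 * Real.cos (Real.pi / q))
    (hk : k ≤ q) :
    (gkQ lam (q - k))⁻¹
      = ⟨-1, neg_one_mem_HeckeTildeQ lam⟩ ^ q * (Qel lam * (gkQ lam k)⁻¹ * Qel lam) := by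
  ext1
  simp only [Subgroup.coe_mul, Subgroup.coe_pow, val_gkQ_inv]
  exact TmatGL_mul_SmatGL_pow_sub_mul_SmatGL lam hq hlam hk

end HeckeRelations

section MoebiusGL

variable (s : ℂ) (g : GL (Fin 2) ℝ)

theorem moebGL_neg (x : ℝ) : moebGL (-g) x = moebGL g x := by
  simp only [moebGL, Units.val_neg, Matrix.neg_apply, neg_mul, ← neg_add, neg_div_neg_eq]

theorem denomGL_neg (x : ℝ) : denomGL (-g) x = -denomGL g x := by
  simp only [denomGL, Units.val_neg, Matrix.neg_apply, neg_mul, neg_add]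

theorem jGL_neg (x : ℝ) : jGL s (-g) x = jGL s g x := by
  simp only [jGL, denomGL_neg, neg_sq, Units.val_neg, Matrix.det_neg, Fintype.card_fin,
    one_pow, one_mul]

theorem val_QmatGL_mul_mul_QmatGL :
    ((QmatGL * g * QmatGL : GL (Fin 2) ℝ) : Matrix (Fin 2) (Fin 2) ℝ)
      = !![(g : Matrix (Fin 2) (Fin 2) ℝ) 1 1, (g : Matrix (Fin 2) (Fin 2) ℝ) 1 0;
          (g : Matrix (Fin 2) (Fin 2) ℝ) 0 1, (g : Matrix (Fin 2) (Fin 2) ℝ) 0 0] := by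
  ext i j; fin_cases i <;> fin_cases j <;>
    simp [QmatGL, Matrix.mul_apply, Fin.sum_univ_two, Matrix.vecMul, dotProduct]

theorem moebGL_QmatGL_mul_mul_QmatGL {x : ℝ} (hx : x ≠ 0) :
    moebGL (QmatGL * g * QmatGL) x = 1 / moebGL g (1 / x) := by
  simp only [moebGL, val_QmatGL_mul_mul_QmatGL, Matrix.of_apply, Matrix.cons_val',
    Matrix.cons_val_zero, Matrix.cons_val_one, Matrix.empty_val', Matrix.cons_val_fin_one]
  field_simp
  ring_nf

theorem jGL_QmatGL_mul_mul_QmatGL {x : ℝ} (hx : x ≠ 0)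
    (hn : denomGL (QmatGL * g * QmatGL) x ≠ 0) :
    ((x ^ 2 : ℝ) : ℂ) ^ (-s) * jGL s g (1 / x)
      = jGL s (QmatGL * g * QmatGL) x
        * (((moebGL (QmatGL * g * QmatGL) x) ^ 2 : ℝ) : ℂ) ^ (-s) := by
  have hdet : ((QmatGL * g * QmatGL : GL (Fin 2) ℝ) : Matrix (Fin 2) (Fin 2) ℝ).det
      = (g : Matrix (Fin 2) (Fin 2) ℝ).det := by
    rw [val_QmatGL_mul_mul_QmatGL, Matrix.det_fin_two_of, Matrix.det_fin_two]; ring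
  have hmoeb : moebGL (QmatGL * g * QmatGL) x
      = x * denomGL g (1 / x) / denomGL (QmatGL * g * QmatGL) x := by
    simp only [moebGL, denomGL, val_QmatGL_mul_mul_QmatGL, Matrix.of_apply, Matrix.cons_val',
      Matrix.cons_val_zero, Matrix.cons_val_one, Matrix.empty_val', Matrix.cons_val_fin_one]
    field_simp
    ring
  rw [jGL, jGL, hdet, hmoeb]
  exact ofReal_cpow_mul_inv_sq_eq s (abs_nonneg _) hn

variable {g} {g' : GL (Fin 2) ℝ} {n : ℕ} {x : ℝ}

theorem moebGL_one_div_eq_of_eq_neg_one_pow_mul (hg : g' = (-1) ^ n * (QmatGL * g * QmatGL))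
    (hx : x ≠ 0) : moebGL g (1 / x) = 1 / moebGL g' x := by
  rcases eq_or_eq_neg_of_eq_neg_one_pow_mul hg with rfl | rfl <;>
    simp only [moebGL_neg, moebGL_QmatGL_mul_mul_QmatGL g hx, one_div_one_div]

theorem jGL_one_div_eq_of_eq_neg_one_pow_mul (hg : g' = (-1) ^ n * (QmatGL * g * QmatGL))
    (hx : x ≠ 0) (hn : denomGL g' x ≠ 0) :
    ((x ^ 2 : ℝ) : ℂ) ^ (-s) * jGL s g (1 / x)
      = jGL s g' x * (((moebGL g' x) ^ 2 : ℝ) : ℂ) ^ (-s) := by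
  rcases eq_or_eq_neg_of_eq_neg_one_pow_mul hg with rfl | rfl
  · exact jGL_QmatGL_mul_mul_QmatGL s g hx hn
  · rw [denomGL_neg, neg_ne_zero] at hn
    rw [jGL_neg, moebGL_neg]
    exact jGL_QmatGL_mul_mul_QmatGL s g hx hn

end MoebiusGL

theorem slowTO_Q_equivariant_general (q : ℕ) (hq : 3 ≤ q) (lam : ℝ)
    (hlam : lam = 2 * Real.cos (Real.pi / q))
    {V : Type} [NormedAddCommGroup V] [InnerProductSpace ℂ V]
    (χ : HeckeTildeQ lam →* (V ≃ₗᵢ[ℂ] V))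
    (hχneg : ∀ h : (-1 : GL (Fin 2) ℝ) ∈ HeckeTildeQ lam, χ ⟨-1, h⟩ = 1)
    (s : ℂ) (f : ℝ → V) (x : ℝ) (hx : 0 < x)
    (hdef : ∀ k ∈ Finset.Icc 1 (q - 1),
      denomGL (((gkQ lam k)⁻¹ : HeckeTildeQ lam) : GL (Fin 2) ℝ) x ≠ 0 ∧
      denomGL (((gkQ lam k)⁻¹ : HeckeTildeQ lam) : GL (Fin 2) ℝ) (1 / x) ≠ 0) :
    let αQ : (ℝ → V) → ℝ → V := fun g y => (((y ^ 2 : ℝ) : ℂ) ^ (-s)) • χ (Qel lam) (g (1 / y))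
    let Lop : (ℝ → V) → ℝ → V := fun g y =>
      ∑ k ∈ Finset.Icc 1 (q - 1),
        jGL s (((gkQ lam k)⁻¹ : HeckeTildeQ lam) : GL (Fin 2) ℝ) y •
          χ (gkQ lam k) (g (moebGL (((gkQ lam k)⁻¹ : HeckeTildeQ lam) : GL (Fin 2) ℝ) y))
    αQ (Lop f) x = Lop (αQ f) x := by
  intro αQ Lop
  simp only [αQ, Lop, map_sum, Finset.smul_sum, LinearIsometryEquiv.map_smul, smul_smul]
  refine Finset.sum_nbij' (q - ·) (q - ·) ?_ ?_ ?_ ?_ ?_ <;> intro k hk <;>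
    simp only [Finset.mem_Icc] at hk ⊢ <;> try omega
  have hconj := gkQ_sub_inv lam (by omega) hlam (k := k) (by omega)
  have hχ := map_mul_comm_of_inv_eq_mul_conj χ (Qel_mul_self lam)
    (by rw [map_pow, hχneg, one_pow]) hconj
  have hGL := congrArg Subtype.val hconj
  rw [moebGL_one_div_eq_of_eq_neg_one_pow_mul hGL hx.ne',
    jGL_one_div_eq_of_eq_neg_one_pow_mul s hGL hx.ne'
      (hdef (q - k) (Finset.mem_Icc.2 ⟨by omega, by omega⟩)).1]
  exact congrArg _ (DFunLike.congr_fun hχ _)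

theorem slowTO_Q_equivariant (q : ℕ) (hq : 3 ≤ q) (lam : ℝ)
    (hlam : lam = 2 * Real.cos (Real.pi / q))
    {V : Type} [NormedAddCommGroup V] [InnerProductSpace ℂ V] [FiniteDimensional ℂ V]
    (χ : HeckeTildeQ lam →* (V ≃ₗᵢ[ℂ] V))
    (hχneg : ∀ h : (-1 : GL (Fin 2) ℝ) ∈ HeckeTildeQ lam, χ ⟨-1, h⟩ = 1)
    (s : ℂ) (f : ℝ → V) (x : ℝ) (hx : 0 < x)
    (hdef : ∀ k ∈ Finset.Icc 1 (q - 1),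
      denomGL (((gkQ lam k)⁻¹ : HeckeTildeQ lam) : GL (Fin 2) ℝ) x ≠ 0 ∧
      denomGL (((gkQ lam k)⁻¹ : HeckeTildeQ lam) : GL (Fin 2) ℝ) (1 / x) ≠ 0) :
    let αQ : (ℝ → V) → ℝ → V := fun g y => (((y ^ 2 : ℝ) : ℂ) ^ (-s)) • χ (Qel lam) (g (1 / y))
    let Lop : (ℝ → V) → ℝ → V := fun g y =>
      ∑ k ∈ Finset.Icc 1 (q - 1),
        jGL s (((gkQ lam k)⁻¹ : HeckeTildeQ lam) : GL (Fin 2) ℝ) y •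
          χ (gkQ lam k) (g (moebGL (((gkQ lam k)⁻¹ : HeckeTildeQ lam) : GL (Fin 2) ℝ) y))
    αQ (Lop f) x = Lop (αQ f) x :=
  slowTO_Q_equivariant_general q hq lam hlam χ hχneg s f x hx hdef
end
end
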